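/- arXiv:2009.06329 — 3 statements merged into one kernel-verified Lean document; each statement's English description precedes it below -/
import Mathlib

section
/- Let V be a nonzero real inner product space, let k ≥ 1, let γ_1, …, γ_k > 0 be positive reals and γ < 0 a negative real. Then the quadratic form on V^k given by (Y_1, …, Y_k) ↦ Σ_{i=1}^k γ_i ‖Y_i‖² + γ^{-1} ‖Σ_{i=1}^k γ_i Y_i‖² is positive definite if and only if γ + Σ_{i=1}^k γ_i < 0. -/
/-!
Write `S = ∑ γᵢ` and `A = ∑ γᵢ ‖Yᵢ‖²`. By the triangle inequality and Cauchy–Schwarz,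
`‖∑ γᵢ Yᵢ‖² ≤ S A`, so since `γ⁻¹ < 0` the form is at least `A (1 + γ⁻¹ S)`; constant tuples
`Yᵢ = v` attain this bound. As `1 + γ⁻¹ S = γ⁻¹ (γ + S)`, its sign is that of `-(γ + S)`.
-/

open Finset

theorem norm_sum_smul_sq_le {ι E : Type*} [SeminormedAddCommGroup E] [NormedSpace ℝ E]
    (s : Finset ι) {w : ι → ℝ} (hw : ∀ i ∈ s, 0 ≤ w i) (x : ι → E) :
    ‖∑ i ∈ s, w i • x i‖ ^ 2 ≤ (∑ i ∈ s, w i) * ∑ i ∈ s, w i * ‖x i‖ ^ 2 := by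
  have hnorm : ‖∑ i ∈ s, w i • x i‖ ≤ ∑ i ∈ s, w i * ‖x i‖ := by
    refine (norm_sum_le _ _).trans_eq (sum_congr rfl fun i hi => ?_)
    rw [norm_smul, Real.norm_of_nonneg (hw i hi)]
  calc ‖∑ i ∈ s, w i • x i‖ ^ 2 ≤ (∑ i ∈ s, w i * ‖x i‖) ^ 2 := by gcongr
    _ ≤ (∑ i ∈ s, w i) * ∑ i ∈ s, w i * ‖x i‖ ^ 2 :=
      sum_sq_le_sum_mul_sum_of_sq_le_mul s hw
        (fun i hi => mul_nonneg (hw i hi) (sq_nonneg _)) (fun i _ => (by ring : _ = _).le)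

theorem sum_mul_norm_sq_pos {ι E : Type*} [Fintype ι] [NormedAddCommGroup E] {w : ι → ℝ}
    (hw : ∀ i, 0 < w i) {x : ι → E} (hx : x ≠ 0) : 0 < ∑ i, w i * ‖x i‖ ^ 2 := by
  obtain ⟨j, hj⟩ := Function.ne_iff.1 hx
  exact sum_pos' (fun i _ => mul_nonneg (hw i).le (sq_nonneg _))
    ⟨j, mem_univ _, mul_pos (hw j) (pow_pos (norm_pos_iff.2 hj) 2)⟩

theorem one_add_inv_mul_pos_iff {γ : ℝ} (hγ : γ < 0) (S : ℝ) :
    0 < 1 + γ⁻¹ * S ↔ γ + S < 0 := by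
  have hγinv : γ⁻¹ < 0 := inv_lt_zero.2 hγ
  rw [show 1 + γ⁻¹ * S = γ⁻¹ * (γ + S) by rw [mul_add, inv_mul_cancel₀ hγ.ne]]
  exact ⟨fun h => neg_of_mul_pos_right h hγinv.le, mul_pos_of_neg_of_neg hγinv⟩

theorem stmt0_general {V : Type*} [NormedAddCommGroup V] [InnerProductSpace ℝ V] [Nontrivial V]
    (k : ℕ) (γi : Fin k → ℝ) (hγi : ∀ i, 0 < γi i) (γ : ℝ) (hγ : γ < 0) :
    (∀ Y : Fin k → V, Y ≠ 0 →
        0 < (∑ i, γi i * ‖Y i‖ ^ 2) + γ⁻¹ * ‖∑ i, γi i • Y i‖ ^ 2) ↔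
      γ + ∑ i, γi i < 0 := by
  set S := ∑ i, γi i
  rw [← one_add_inv_mul_pos_iff hγ]
  constructor
  · intro hpos
    rcases isEmpty_or_nonempty (Fin k) with _ | ⟨⟨j⟩⟩
    · simp [S]
    obtain ⟨v, hv⟩ := exists_ne (0 : V)
    have hconst := hpos (fun _ => v) (Function.ne_iff.2 ⟨j, hv⟩)
    rw [← sum_smul, norm_smul, Real.norm_of_nonneg (sum_nonneg fun i _ => (hγi i).le),
      ← sum_mul] at hconst
    refine pos_of_mul_pos_right (a := S * ‖v‖ ^ 2) (by linear_combination hconst) ?_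
    exact mul_nonneg (sum_nonneg fun i _ => (hγi i).le) (sq_nonneg _)
  · intro hS Y hY
    set A := ∑ i, γi i * ‖Y i‖ ^ 2
    have hCS : ‖∑ i, γi i • Y i‖ ^ 2 ≤ S * A :=
      norm_sum_smul_sq_le univ (fun i _ => (hγi i).le) Y
    calc 0 < A * (1 + γ⁻¹ * S) := mul_pos (sum_mul_norm_sq_pos hγi hY) hS
      _ = A + γ⁻¹ * (S * A) := by ring
      _ ≤ A + γ⁻¹ * ‖∑ i, γi i • Y i‖ ^ 2 :=
        add_le_add_right (mul_le_mul_of_nonpos_left hCS (inv_lt_zero.2 hγ).le) A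

/-- The quadratic form `(Y₁,…,Y_k) ↦ ∑ γᵢ‖Yᵢ‖² + γ⁻¹‖∑ γᵢ Yᵢ‖²` on `V^k`
(with all `γᵢ > 0` and `γ < 0`) is positive definite iff `γ + ∑ γᵢ < 0`. -/
theorem stmt0 {V : Type*} [NormedAddCommGroup V] [InnerProductSpace ℝ V] [Nontrivial V]
    (k : ℕ) (hk : 1 ≤ k) (γi : Fin k → ℝ) (hγi : ∀ i, 0 < γi i) (γ : ℝ) (hγ : γ < 0) :
    (∀ Y : Fin k → V, Y ≠ 0 →
        0 < (∑ i, γi i * ‖Y i‖ ^ 2) + γ⁻¹ * ‖∑ i, γi i • Y i‖ ^ 2) ↔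
      γ + ∑ i, γi i < 0 :=
  stmt0_general k γi hγi γ hγ
end

section
/- Let w ∈ ℂ² be nonzero, let μ ∈ ℂ, and let ρ, t ∈ ℝ. Let J denote the 2 × 2 matrix with rows (0, 1) and (−1, 0), and let w̄ denote componentwise complex conjugation of w. Then there exists F ∈ su(2) (a 2 × 2 traceless skew-Hermitian complex matrix) such that F w + ρ μ J w̄ + ρ t i w = 0. -/
/-!
For `w ≠ 0`, every `v` with `⟪w, v⟫` purely imaginary is `F w` for a traceless skew-Hermitian
`F`, namely
`F = (v w* - w v* - ⟪w, v⟫ I) / ‖w‖²`, since `v w* - w v*` sends `w` to `‖w‖² v + ⟪w, v⟫ w`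
and the scalar correction removes the second term (and, in dimension two, the trace).
Here `v = -(ρ μ J w̄ + ρ t i w)`, and `⟪w, v⟫ = -ρ t i ‖w‖²` because `w̄ᵀ J w̄ = 0`.
-/

open Matrix

open scoped ComplexOrder

section SkewHermitianSending

variable {𝕜 n : Type*} [RCLike 𝕜] [Fintype n] [DecidableEq n]

noncomputable def skewHermitianSending (w v : n → 𝕜) : Matrix n n 𝕜 :=
  (star w ⬝ᵥ w)⁻¹ • (vecMulVec v (star w) - vecMulVec w (star v) - (star w ⬝ᵥ v) • 1)

variable {w v : n → 𝕜}

lemma conjTranspose_skewHermitianSending (hv : star (star w ⬝ᵥ v) = -(star w ⬝ᵥ v)) :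
    (skewHermitianSending w v)ᴴ = -skewHermitianSending w v := by
  simp only [skewHermitianSending, conjTranspose_smul, conjTranspose_sub, conjTranspose_vecMulVec,
    star_star, star_inv₀, ← star_dotProduct, hv, conjTranspose_one]
  module

lemma skewHermitianSending_mulVec (hv : star (star w ⬝ᵥ v) = -(star w ⬝ᵥ v)) (hw : w ≠ 0) :
    skewHermitianSending w v *ᵥ w = v := by
  have hww : star w ⬝ᵥ w ≠ 0 := dotProduct_star_self_eq_zero.not.mpr hw
  simp only [skewHermitianSending, smul_mulVec, sub_mulVec, vecMulVec_mulVec, one_mulVec,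
    op_smul_eq_smul, star_dotProduct v w, hv, neg_smul, sub_neg_eq_add, add_sub_cancel_right,
    smul_smul, inv_mul_cancel₀ hww, one_smul]

lemma trace_skewHermitianSending {w v : Fin 2 → 𝕜} (hv : star (star w ⬝ᵥ v) = -(star w ⬝ᵥ v)) :
    (skewHermitianSending w v).trace = 0 := by
  rw [skewHermitianSending, trace_smul, trace_sub, trace_sub, trace_vecMulVec, trace_vecMulVec,
    trace_smul, trace_one, dotProduct_comm v, dotProduct_comm w, star_dotProduct v w, hv,
    Fintype.card_fin]
  simp only [smul_eq_mul]
  ring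

end SkewHermitianSending

lemma dotProduct_symplectic_mulVec_self {R : Type*} [CommRing R] (x : Fin 2 → R) :
    x ⬝ᵥ !![0, 1; -1, 0] *ᵥ x = 0 := by
  simp [dotProduct, mulVec, Fin.sum_univ_two, mul_comm]

/-- For nonzero `w ∈ ℂ²`, `μ ∈ ℂ`, `ρ, t ∈ ℝ`, there exists `F ∈ su(2)`
(traceless skew-Hermitian) with `F w + ρ μ J w̄ + ρ t i w = 0`, where
`J = [[0,1],[-1,0]]`. -/
theorem stmt8 (w : Fin 2 → ℂ) (hw : w ≠ 0) (μ : ℂ) (ρ t : ℝ) :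
    ∃ F : Matrix (Fin 2) (Fin 2) ℂ, Fᴴ = -F ∧ F.trace = 0 ∧
      F.mulVec w + ((ρ : ℂ) * μ) • (!![0, 1; -1, 0] : Matrix (Fin 2) (Fin 2) ℂ).mulVec
          (fun j => starRingEnd ℂ (w j)) + ((ρ : ℂ) * (t : ℂ) * Complex.I) • w = 0 := by
  set v : Fin 2 → ℂ :=
    -(((ρ : ℂ) * μ) • !![0, 1; -1, 0] *ᵥ star w + ((ρ : ℂ) * t * Complex.I) • w)
  have hv : star w ⬝ᵥ v = -((ρ : ℂ) * t * Complex.I) * (star w ⬝ᵥ w) := by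
    simp only [v, dotProduct_neg, dotProduct_add, dotProduct_smul,
      dotProduct_symplectic_mulVec_self, smul_eq_mul, mul_zero, zero_add, neg_mul]
  have hv_skew : star (star w ⬝ᵥ v) = -(star w ⬝ᵥ v) := by
    rw [hv, star_mul', ← star_dotProduct]
    simp
  refine ⟨skewHermitianSending w v, conjTranspose_skewHermitianSending hv_skew,
    trace_skewHermitianSending hv_skew, ?_⟩
  rw [skewHermitianSending_mulVec hv_skew hw, add_assoc]
  exact neg_add_cancel _
end

section
/- Let G be a compact connected semisimple Lie group with Lie algebra g, and let H ⊆ G be a closed subgroup with Lie algebra h, with reductive decomposition g = h ⊕ p. Suppose the invariant metric determined by a positive Ad(H)-equivariant symmetric endomorphism A : p → p is geodesic orbit, i.e., for every X ∈ p there is Z ∈ h with [X + Z, AX] = 0 (brackets in g, A extended by 0 on h). If X ∈ p is an eigenvector of A with eigenvalue α_i, Y ∈ p is an eigenvector with eigenvalue α_j, and α_i ≠ α_j, then there exists Z ∈ h such that [X, Y] = (α_i/(α_i − α_j))[Z, X] + (α_j/(α_i − α_j))[Z, Y]. -/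
/-!
Apply the geodesic-orbit condition to `X + Y`: since `A (X + Y) = αᵢ X + αⱼ Y`, there is
`Z ∈ h` with `[X + Y + Z, αᵢ X + αⱼ Y] = 0`. Expanding, the terms `[X, X]` and `[Y, Y]` vanish
and what remains is `(αᵢ - αⱼ)[X, Y] = αᵢ [Z, X] + αⱼ [Z, Y]`; divide by `αᵢ - αⱼ`.
-/

theorem sub_smul_lie_eq_of_lie_add_add_smul_eq_zero {R L : Type*} [CommRing R] [LieRing L]
    [LieAlgebra R L] {X Y Z : L} {a b : R} (h : ⁅X + Y + Z, a • X + b • Y⁆ = 0) :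
    (a - b) • ⁅X, Y⁆ = a • ⁅Z, X⁆ + b • ⁅Z, Y⁆ := by
  simp only [lie_add, add_lie, lie_smul, lie_self, zero_add, add_zero] at h
  rw [← lie_skew Y X] at h
  linear_combination (norm := module) -h

theorem stmt14_general {g : Type*} [LieRing g] [LieAlgebra ℝ g]
    (h p : Submodule ℝ g)
    (A : p →ₗ[ℝ] p)
    (hGO : ∀ X : p, ∃ Z ∈ h, ⁅(X : g) + Z, (A X : g)⁆ = 0)
    (X Y : p) (αi αj : ℝ) (hX : A X = αi • X) (hY : A Y = αj • Y)
    (hij : αi ≠ αj) :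
    ∃ Z ∈ h, ⁅(X : g), (Y : g)⁆ =
      (αi / (αi - αj)) • ⁅Z, (X : g)⁆ + (αj / (αi - αj)) • ⁅Z, (Y : g)⁆ := by
  obtain ⟨Z, hZ, hz⟩ := hGO (X + Y)
  rw [map_add, hX, hY] at hz
  push_cast at hz
  have key := sub_smul_lie_eq_of_lie_add_add_smul_eq_zero hz
  refine ⟨Z, hZ, ?_⟩
  have hd : αi - αj ≠ 0 := sub_ne_zero.mpr hij
  rw [div_eq_inv_mul, div_eq_inv_mul, mul_smul, mul_smul, ← smul_add, ← key, smul_smul,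
    inv_mul_cancel₀ hd, one_smul]

/-- Geodesic-orbit spaces, Lie-algebra form (Lemma on brackets of eigenvectors):
let `g = h ⊕ p` be a reductive decomposition and `A : p → p` the metric
endomorphism of a geodesic orbit metric, i.e. for every `X ∈ p` there is
`Z ∈ h` with `[X + Z, AX] = 0`.  If `X, Y ∈ p` are eigenvectors of `A` with
distinct eigenvalues `αᵢ ≠ αⱼ`, then there is `Z ∈ h` with
`[X, Y] = (αᵢ/(αᵢ-αⱼ))[Z, X] + (αⱼ/(αᵢ-αⱼ))[Z, Y]`. -/
theorem stmt14 {g : Type*} [LieRing g] [LieAlgebra ℝ g]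
    (h p : Submodule ℝ g) (hcompl : IsCompl h p)
    (A : p →ₗ[ℝ] p)
    (hGO : ∀ X : p, ∃ Z ∈ h, ⁅(X : g) + Z, (A X : g)⁆ = 0)
    (X Y : p) (αi αj : ℝ) (hX : A X = αi • X) (hY : A Y = αj • Y)
    (hij : αi ≠ αj) :
    ∃ Z ∈ h, ⁅(X : g), (Y : g)⁆ =
      (αi / (αi - αj)) • ⁅Z, (X : g)⁆ + (αj / (αi - αj)) • ⁅Z, (Y : g)⁆ :=
  stmt14_general h p A hGO X Y αi αj hX hY hij
end
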